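/- Let G be a finite group, L a subgroup of G, L' a subgroup of L, K a subset of G with KL' ⊆ K, and S a left L'-uniform subset of L. Then for every h ∈ G with hL ∩ K nonempty, |hS ∩ K| / |S| = |hL ∩ K| / |L|. -/
import Mathlib

open Pointwise

private lemma aux_count {G : Type*} [Group G] [Fintype G] [DecidableEq G]
    (L L' : Subgroup G) (hL' : L' ≤ L)
    (K : Set G) (hK : K * (L' : Set G) ⊆ K)
    (S : Set G) (hS : S ⊆ L) (q : ℕ)
    (hunif : ∀ ℓ ∈ L, (S ∩ ℓ • (L' : Set G)).ncard = q)
    (h : G) :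
    (h • S ∩ K).ncard * (L' : Set G).ncard = q * (h • (L : Set G) ∩ K).ncard := by
  classical
  have hinj : Function.Injective (fun x : G => h * x) := fun a b hab => by
    simpa using hab
  set T : Finset G := (L : Set G).toFinset.filter (fun ℓ => h * ℓ ∈ K) with hTdef
  set S' : Finset G := S.toFinset.filter (fun s => h * s ∈ K) with hS'def
  have cardT : (h • (L : Set G) ∩ K).ncard = T.card := by
    have heq : h • (L : Set G) ∩ K
        = (fun x => h * x) '' ((L : Set G) ∩ {x | h * x ∈ K}) := by
      ext x
      simp only [Set.mem_inter_iff, Set.mem_image, Set.mem_smul_set, smul_eq_mul,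
        Set.mem_setOf_eq]
      constructor
      · rintro ⟨⟨y, hy, rfl⟩, hxK⟩; exact ⟨y, ⟨hy, hxK⟩, rfl⟩
      · rintro ⟨y, ⟨hy, hK'⟩, rfl⟩; exact ⟨⟨y, hy, rfl⟩, hK'⟩
    rw [heq, Set.ncard_image_of_injective _ hinj, Set.ncard_eq_toFinset_card']
    congr 1
    ext x
    simp [hTdef]
  have cardS' : (h • S ∩ K).ncard = S'.card := by
    have heq : h • S ∩ K = (fun x => h * x) '' (S ∩ {x | h * x ∈ K}) := by
      ext x
      simp only [Set.mem_inter_iff, Set.mem_image, Set.mem_smul_set, smul_eq_mul,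
        Set.mem_setOf_eq]
      constructor
      · rintro ⟨⟨y, hy, rfl⟩, hxK⟩; exact ⟨y, ⟨hy, hxK⟩, rfl⟩
      · rintro ⟨y, ⟨hy, hK'⟩, rfl⟩; exact ⟨⟨y, hy, rfl⟩, hK'⟩
    rw [heq, Set.ncard_image_of_injective _ hinj, Set.ncard_eq_toFinset_card']
    congr 1
    ext x
    simp [hS'def]
  have step1 : ∀ ℓ ∈ T, (S.toFinset.filter (fun s => s ∈ ℓ • (L' : Set G))).card = q := by
    intro ℓ hℓ
    have hℓL : ℓ ∈ L := by
      rw [hTdef] at hℓ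
      simpa using (Finset.mem_filter.mp hℓ).1
    have : S.toFinset.filter (fun s => s ∈ ℓ • (L' : Set G))
        = (S ∩ ℓ • (L' : Set G)).toFinset := by
      ext x
      simp only [Finset.mem_filter, Set.mem_toFinset, Set.mem_inter_iff]
    rw [this, ← Set.ncard_eq_toFinset_card', hunif ℓ hℓL]
  have step2 : ∀ s ∈ S.toFinset, (T.filter (fun ℓ => s ∈ ℓ • (L' : Set G))).card
      = if h * s ∈ K then (L' : Set G).ncard else 0 := by
    intro s hs
    have hsS : s ∈ S := by simpa using hs
    by_cases hsk : h * s ∈ K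
    · rw [if_pos hsk]
      have hfe : T.filter (fun ℓ => s ∈ ℓ • (L' : Set G)) = (s • (L' : Set G)).toFinset := by
        ext ℓ
        simp only [Finset.mem_filter, hTdef, Set.mem_toFinset, Set.mem_smul_set,
          smul_eq_mul, SetLike.mem_coe]
        constructor
        · rintro ⟨⟨hℓL, hℓK⟩, l', hl', hsl⟩
          exact ⟨l'⁻¹, inv_mem hl', by rw [← hsl]; group⟩
        · rintro ⟨l', hl', rfl⟩
          refine ⟨⟨mul_mem (hS hsS) (hL' hl'), ?_⟩, l'⁻¹, inv_mem hl', by group⟩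
          have : h * (s * l') = (h * s) * l' := by group
          rw [this]
          exact hK (Set.mul_mem_mul hsk hl')
      rw [hfe, ← Set.ncard_eq_toFinset_card', Set.ncard_smul_set]
    · rw [if_neg hsk]
      rw [Finset.card_eq_zero, Finset.filter_eq_empty_iff]
      intro ℓ hℓ hsmem
      rw [hTdef] at hℓ
      obtain ⟨hℓL, hℓK⟩ := Finset.mem_filter.mp hℓ
      obtain ⟨l', hl', rfl⟩ := hsmem
      exact hsk (by
        have : h * (ℓ • l') = (h * ℓ) * l' := by simp [smul_eq_mul, mul_assoc]
        rw [this]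
        exact hK (Set.mul_mem_mul hℓK hl'))
  calc (h • S ∩ K).ncard * (L' : Set G).ncard
      = ∑ s ∈ S.toFinset, (if h * s ∈ K then (L' : Set G).ncard else 0) := by
        rw [cardS', ← Finset.sum_filter, Finset.sum_const, smul_eq_mul, hS'def]
    _ = ∑ s ∈ S.toFinset, (T.filter (fun ℓ => s ∈ ℓ • (L' : Set G))).card := by
        exact (Finset.sum_congr rfl step2).symm
    _ = ∑ s ∈ S.toFinset, ∑ ℓ ∈ T, (if s ∈ ℓ • (L' : Set G) then 1 else 0) := by
        refine Finset.sum_congr rfl fun s _ => ?_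
        rw [Finset.card_filter]
    _ = ∑ ℓ ∈ T, ∑ s ∈ S.toFinset, (if s ∈ ℓ • (L' : Set G) then 1 else 0) :=
        Finset.sum_comm
    _ = ∑ ℓ ∈ T, (S.toFinset.filter (fun s => s ∈ ℓ • (L' : Set G))).card := by
        refine Finset.sum_congr rfl fun ℓ _ => ?_
        rw [Finset.card_filter]
    _ = ∑ _ℓ ∈ T, q := Finset.sum_congr rfl step1
    _ = q * (h • (L : Set G) ∩ K).ncard := by
        rw [Finset.sum_const, cardT, smul_eq_mul, mul_comm]

theorem stmt_8 {G : Type*} [Group G] [Finite G] (L L' : Subgroup G) (hL' : L' ≤ L)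
    (K : Set G) (hK : K * (L' : Set G) ⊆ K)
    (S : Set G) (hS : S ⊆ L) (q : ℕ) (hq : 0 < q)
    (hunif : ∀ ℓ ∈ L, (S ∩ ℓ • (L' : Set G)).ncard = q)
    (h : G) (hne : (h • (L : Set G) ∩ K).Nonempty) :
    ((h • S ∩ K).ncard : ℚ) / (S.ncard : ℚ)
      = ((h • (L : Set G) ∩ K).ncard : ℚ) / ((L : Set G).ncard : ℚ) := by
  classical
  have := Fintype.ofFinite G
  have hA := aux_count L L' hL' K hK S hS q hunif h
  have hB := aux_count L L' hL' Set.univ (by simp) S hS q hunif 1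
  simp only [one_smul, Set.inter_univ] at hB
  -- positivity facts
  have hLpos : 0 < (L : Set G).ncard :=
    (Set.ncard_pos (Set.toFinite _)).mpr ⟨1, one_mem L⟩
  have hL'pos : 0 < (L' : Set G).ncard :=
    (Set.ncard_pos (Set.toFinite _)).mpr ⟨1, one_mem L'⟩
  have hbpos : 0 < (h • (L : Set G) ∩ K).ncard :=
    (Set.ncard_pos (Set.toFinite _)).mpr hne
  have hSpos : 0 < S.ncard := by
    by_contra hc
    push_neg at hc
    interval_cases hS0 : S.ncard
    · simp [hS0] at hB
      omega
  -- cast to ℚ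
  have h1 : ((h • S ∩ K).ncard : ℚ) * (L' : Set G).ncard
      = q * (h • (L : Set G) ∩ K).ncard := by exact_mod_cast hA
  have h2 : (S.ncard : ℚ) * (L' : Set G).ncard = q * (L : Set G).ncard := by
    exact_mod_cast hB
  have hql' : (q : ℚ) * (L' : Set G).ncard ≠ 0 := by
    positivity
  rw [div_eq_div_iff (by exact_mod_cast hSpos.ne') (by exact_mod_cast hLpos.ne')]
  apply mul_right_cancel₀ hql'
  calc ((h • S ∩ K).ncard : ℚ) * (L : Set G).ncard * ((q : ℚ) * (L' : Set G).ncard)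
      = (((h • S ∩ K).ncard : ℚ) * (L' : Set G).ncard) * ((q : ℚ) * (L : Set G).ncard) := by
        ring
    _ = ((q : ℚ) * (h • (L : Set G) ∩ K).ncard) * ((S.ncard : ℚ) * (L' : Set G).ncard) := by
        rw [h1, h2]
    _ = ((h • (L : Set G) ∩ K).ncard : ℚ) * S.ncard * ((q : ℚ) * (L' : Set G).ncard) := by
        ring
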